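/- Let a : ℝ → ℝ be smooth and let u(t,r) be a C³ function of (t,r) with t ≥ 0, r > 0, with a(u(t,r)) > 0, satisfying u_tt = a(u)²(u_rr + (2/r)u_r). Set v = ru and M± = a(u)^{−1}∂_t ± ∂_r. Then the pointwise identities hold for all t ≥ 0, r > 0: (1) M₋M₊v = −a'(u) r (M₋u) u_t / a(u)²; (2) M₋M₊[(t−r)v] = −a'(u)(t−r) r (M₋u) u_t / a(u)² + ((1 + a(u))/a(u)) M₊v + M₋( ((1 − a(u))/a(u)) v ). -/

import Mathlib

open MeasureTheory Real Set Metric Function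

noncomputable section

/-- Partial derivative in time of `u(t,r)`. -/
def pt (u : ℝ → ℝ → ℝ) (t r : ℝ) : ℝ := deriv (fun s => u s r) t

/-- Partial derivative in `r` of `u(t,r)`. -/
def pr (u : ℝ → ℝ → ℝ) (t r : ℝ) : ℝ := deriv (u t) r

/-- `|∂u(t,r)|`, the magnitude of `(u_t, u_r)`. -/
def pd (u : ℝ → ℝ → ℝ) (t r : ℝ) : ℝ := Real.sqrt ((pt u t r)^2 + (pr u t r)^2)

/-- `v = r·u`. -/
def vf (u : ℝ → ℝ → ℝ) : ℝ → ℝ → ℝ := fun t r => r * u t r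

/-- The weighted null operator `M₊ = a(u)^{-1} ∂_t + ∂_r`. -/
def Mp (A : ℝ → ℝ) (u w : ℝ → ℝ → ℝ) : ℝ → ℝ → ℝ := fun t r =>
  pt w t r / A (u t r) + pr w t r

/-- The weighted null operator `M₋ = a(u)^{-1} ∂_t - ∂_r`. -/
def Mm (A : ℝ → ℝ) (u w : ℝ → ℝ → ℝ) : ℝ → ℝ → ℝ := fun t r =>
  pt w t r / A (u t r) - pr w t r

lemma sliceT (G : ℝ × ℝ → ℝ) {t r : ℝ} (hG : DifferentiableAt ℝ G (t, r)) :
    HasDerivAt (fun s => G (s, r)) (fderiv ℝ G (t, r) (1, 0)) t := by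
  have h1 : HasDerivAt (fun s : ℝ => (s, r)) ((1 : ℝ), (0 : ℝ)) t :=
    (hasDerivAt_id t).prodMk (hasDerivAt_const t r)
  exact hG.hasFDerivAt.comp_hasDerivAt t h1

lemma sliceR (G : ℝ × ℝ → ℝ) {t r : ℝ} (hG : DifferentiableAt ℝ G (t, r)) :
    HasDerivAt (fun ρ => G (t, ρ)) (fderiv ℝ G (t, r) (0, 1)) r := by
  have h1 : HasDerivAt (fun ρ : ℝ => (t, ρ)) ((0 : ℝ), (1 : ℝ)) r :=
    (hasDerivAt_const r t).prodMk (hasDerivAt_id r)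
  exact hG.hasFDerivAt.comp_hasDerivAt r h1

lemma symm2 (F : ℝ × ℝ → ℝ) (hF : ContDiff ℝ 3 F) (p : ℝ × ℝ) (v w : ℝ × ℝ) :
    fderiv ℝ (fun q => fderiv ℝ F q v) p w = fderiv ℝ (fun q => fderiv ℝ F q w) p v := by
  have hdF : Differentiable ℝ (fderiv ℝ F) :=
    (hF.fderiv_right (m := 1) (by norm_num)).differentiable one_ne_zero
  have e : ∀ z : ℝ × ℝ, fderiv ℝ (fun q => fderiv ℝ F q z) p
      = (ContinuousLinearMap.apply ℝ ℝ z).comp (fderiv ℝ (fderiv ℝ F) p) := by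
    intro z
    exact ((ContinuousLinearMap.apply ℝ ℝ z).hasFDerivAt.comp p (hdF p).hasFDerivAt).fderiv
  rw [e v, e w]
  simpa using (hF.contDiffAt.isSymmSndFDerivAt (by norm_num)).eq w v

theorem stmt15 (A : ℝ → ℝ) (hA : ContDiff ℝ (⊤ : ℕ∞) A)
    (u : ℝ → ℝ → ℝ) (hu : ContDiff ℝ 3 (Function.uncurry u))
    (hpos : ∀ t r, 0 < A (u t r))
    (hpde : ∀ t r, 0 ≤ t → 0 < r →
      pt (pt u) t r = (A (u t r))^2 * (pr (pr u) t r + (2 / r) * pr u t r)) :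
    ∀ t r, 0 ≤ t → 0 < r →
      Mm A u (Mp A u (vf u)) t r
        = -(deriv A (u t r)) * r * Mm A u u t r * pt u t r / (A (u t r))^2
      ∧ Mm A u (Mp A u (fun t' r' => (t' - r') * vf u t' r')) t r
        = -(deriv A (u t r)) * (t - r) * r * Mm A u u t r * pt u t r / (A (u t r))^2
          + ((1 + A (u t r)) / A (u t r)) * Mp A u (vf u) t r
          + Mm A u (fun t' r' => ((1 - A (u t' r')) / A (u t' r')) * vf u t' r') t r := by
  intro t r ht hr
  have hA1 : Differentiable ℝ A := hA.differentiable (by simp)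
  set F : ℝ × ℝ → ℝ := Function.uncurry u with hFdef
  have hF : ContDiff ℝ 3 F := hu
  have hF1 : Differentiable ℝ F := hF.differentiable (by norm_num)
  set UT : ℝ × ℝ → ℝ := (fun p => fderiv ℝ F p (1, 0)) with hUTdef
  set UR : ℝ × ℝ → ℝ := (fun p => fderiv ℝ F p (0, 1)) with hURdef
  have hUT1 : Differentiable ℝ UT :=
    ((hF.fderiv_right (m := 2) (by norm_num)).clm_apply contDiff_const).differentiable (by norm_num)
  have hUR1 : Differentiable ℝ UR :=
    ((hF.fderiv_right (m := 2) (by norm_num)).clm_apply contDiff_const).differentiable (by norm_num)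
  -- first-order slice derivatives
  have hu_t : ∀ t' r' : ℝ, HasDerivAt (fun s => u s r') (UT (t', r')) t' :=
    fun t' r' => sliceT F (hF1 _)
  have hu_r : ∀ t' r' : ℝ, HasDerivAt (fun ρ => u t' ρ) (UR (t', r')) r' :=
    fun t' r' => sliceR F (hF1 _)
  have ha : A (u t r) ≠ 0 := (hpos t r).ne'
  -- second-order slice derivatives at (t,r)
  have hT_t : HasDerivAt (fun s => UT (s, r)) (fderiv ℝ UT (t, r) (1, 0)) t := sliceT UT (hUT1 _)
  have hT_r : HasDerivAt (fun ρ => UT (t, ρ)) (fderiv ℝ UT (t, r) (0, 1)) r := sliceR UT (hUT1 _)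
  have hR_t : HasDerivAt (fun s => UR (s, r)) (fderiv ℝ UR (t, r) (1, 0)) t := sliceT UR (hUR1 _)
  have hR_r : HasDerivAt (fun ρ => UR (t, ρ)) (fderiv ℝ UR (t, r) (0, 1)) r := sliceR UR (hUR1 _)
  have hsymm : fderiv ℝ UT (t, r) (0, 1) = fderiv ℝ UR (t, r) (1, 0) := by
    rw [hUTdef, hURdef]; exact symm2 F hF (t, r) _ _
  -- chain rule for A ∘ u slices
  have hA_t : HasDerivAt (fun s => A (u s r)) (deriv A (u t r) * UT (t, r)) t :=
    (hA1 (u t r)).hasDerivAt.comp t (hu_t t r)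
  have hA_r : HasDerivAt (fun ρ => A (u t ρ)) (deriv A (u t r) * UR (t, r)) r :=
    (hA1 (u t r)).hasDerivAt.comp r (hu_r t r)
  -- translate the PDE
  have hTT : fderiv ℝ UT (t, r) (1, 0)
      = (A (u t r))^2 * (fderiv ℝ UR (t, r) (0, 1) + (2 / r) * UR (t, r)) := by
    have h1 := hpde t r ht hr
    have e1 : pt (pt u) t r = fderiv ℝ UT (t, r) (1, 0) := by
      rw [pt, show (fun s => pt u s r) = fun s => UT (s, r) from
        funext fun s => (hu_t s r).deriv]
      exact hT_t.deriv
    have e2 : pr (pr u) t r = fderiv ℝ UR (t, r) (0, 1) := by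
      rw [pr, show (pr u t) = fun ρ => UR (t, ρ) from
        funext fun ρ => (hu_r t ρ).deriv]
      exact hR_r.deriv
    have e3 : pr u t r = UR (t, r) := (hu_r t r).deriv
    rw [e1, e2, e3] at h1
    exact h1
  -- the function W = M₊ v in closed form
  set Wc : ℝ × ℝ → ℝ := (fun p => p.2 * UT p / A (F p) + (F p + p.2 * UR p)) with hWcdef
  have hW : ∀ t' r', Mp A u (vf u) t' r' = Wc (t', r') := by
    intro t' r'
    have h1 : pt (vf u) t' r' = r' * UT (t', r') := by
      rw [pt]; exact ((hu_t t' r').const_mul r').deriv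
    have h2 : pr (vf u) t' r' = 1 * u t' r' + r' * UR (t', r') := by
      rw [pr]; exact ((hasDerivAt_id r').mul (hu_r t' r')).deriv
    simp only [Mp, h1, h2, hWcdef]
    show r' * UT (t', r') / A (u t' r') + (1 * u t' r' + r' * UR (t', r'))
      = r' * UT (t', r') / A (u t' r') + (u t' r' + r' * UR (t', r'))
    ring
  -- derivatives of W slices at (t,r)
  have hWt : HasDerivAt (fun s => Wc (s, r))
      ((r * fderiv ℝ UT (t, r) (1, 0) * A (u t r)
          - r * UT (t, r) * (deriv A (u t r) * UT (t, r))) / (A (u t r)) ^ 2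
        + (UT (t, r) + r * fderiv ℝ UR (t, r) (1, 0))) t :=
    (((hT_t.const_mul r).div hA_t ha)).add ((hu_t t r).add (hR_t.const_mul r))
  have hWr : HasDerivAt (fun ρ => Wc (t, ρ))
      (((1 * UT (t, r) + r * fderiv ℝ UT (t, r) (0, 1)) * A (u t r)
          - r * UT (t, r) * (deriv A (u t r) * UR (t, r))) / (A (u t r)) ^ 2
        + (UR (t, r) + (1 * UR (t, r) + r * fderiv ℝ UR (t, r) (0, 1)))) r :=
    ((((hasDerivAt_id r).mul hT_r).div hA_r ha)).add ((hu_r t r).add ((hasDerivAt_id r).mul hR_r))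
  have hptW : pt (Mp A u (vf u)) t r
      = (r * fderiv ℝ UT (t, r) (1, 0) * A (u t r)
          - r * UT (t, r) * (deriv A (u t r) * UT (t, r))) / (A (u t r)) ^ 2
        + (UT (t, r) + r * fderiv ℝ UR (t, r) (1, 0)) := by
    rw [pt, show (fun s => Mp A u (vf u) s r) = fun s => Wc (s, r) from
      funext fun s => hW s r]
    exact hWt.deriv
  have hprW : pr (Mp A u (vf u)) t r
      = ((1 * UT (t, r) + r * fderiv ℝ UT (t, r) (0, 1)) * A (u t r)
          - r * UT (t, r) * (deriv A (u t r) * UR (t, r))) / (A (u t r)) ^ 2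
        + (UR (t, r) + (1 * UR (t, r) + r * fderiv ℝ UR (t, r) (0, 1))) := by
    rw [pr, show (Mp A u (vf u) t) = fun ρ => Wc (t, ρ) from
      funext fun ρ => hW t ρ]
    exact hWr.deriv
  have hptu : pt u t r = UT (t, r) := (hu_t t r).deriv
  have hpru : pr u t r = UR (t, r) := (hu_r t r).deriv
  have part1 : Mm A u (Mp A u (vf u)) t r
      = -(deriv A (u t r)) * r * Mm A u u t r * pt u t r / (A (u t r))^2 := by
    simp only [Mm, hptW, hprW, hptu, hpru, hTT, hsymm]
    field_simp
    ring
  refine ⟨part1, ?_⟩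
  set Hc : ℝ × ℝ → ℝ := (fun p => (1 - A (F p)) / A (F p) * (p.2 * F p)) with hHcdef
  have hAF : Differentiable ℝ (fun p : ℝ × ℝ => A (F p)) := hA1.comp hF1
  have hAne : ∀ p : ℝ × ℝ, A (F p) ≠ 0 := fun p => (hpos p.1 p.2).ne'
  have hq1 : Differentiable ℝ (fun p : ℝ × ℝ => (1 - A (F p)) / A (F p)) :=
    by simp only [div_eq_mul_inv]; exact (hAF.const_sub 1).mul (hAF.inv hAne)
  have hq2 : Differentiable ℝ (fun p : ℝ × ℝ => p.2 * F p) := differentiable_snd.mul hF1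
  have hHc1 : Differentiable ℝ Hc := hq1.mul hq2
  have hH_t : HasDerivAt (fun s => Hc (s, r)) (fderiv ℝ Hc (t, r) (1, 0)) t := sliceT Hc (hHc1 _)
  have hH_r : HasDerivAt (fun ρ => Hc (t, ρ)) (fderiv ℝ Hc (t, r) (0, 1)) r := sliceR Hc (hHc1 _)
  have hMp2 : ∀ t' r', Mp A u (fun t'' r'' => (t'' - r'') * vf u t'' r'') t' r'
      = (t' - r') * Wc (t', r') + Hc (t', r') := by
    intro t' r'
    have h1 : pt (fun t'' r'' => (t'' - r'') * vf u t'' r'') t' r'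
        = 1 * (r' * u t' r') + (t' - r') * (r' * UT (t', r')) := by
      rw [pt]
      exact (((hasDerivAt_id t').sub_const r').mul ((hu_t t' r').const_mul r')).deriv
    have h2 : pr (fun t'' r'' => (t'' - r'') * vf u t'' r'') t' r'
        = (0 - 1) * (r' * u t' r') + (t' - r') * (1 * u t' r' + r' * UR (t', r')) := by
      rw [pr]
      exact (((hasDerivAt_const r' t').sub (hasDerivAt_id r')).mul
        ((hasDerivAt_id r').mul (hu_r t' r'))).deriv
    have hane : A (u t' r') ≠ 0 := (hpos t' r').ne'
    simp only [Mp, h1, h2]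
    show (1 * (r' * u t' r') + (t' - r') * (r' * UT (t', r'))) / A (u t' r')
        + ((0 - 1) * (r' * u t' r') + (t' - r') * (1 * u t' r' + r' * UR (t', r')))
      = (t' - r') * (r' * UT (t', r') / A (u t' r') + (u t' r' + r' * UR (t', r')))
        + (1 - A (u t' r')) / A (u t' r') * (r' * u t' r')
    field_simp
    ring
  have hφt : HasDerivAt (fun s => (s - r) * Wc (s, r) + Hc (s, r))
      (1 * Wc (t, r) + (t - r) * pt (Mp A u (vf u)) t r + fderiv ℝ Hc (t, r) (1, 0)) t := by
    rw [hptW]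
    exact (((hasDerivAt_id t).sub_const r).mul hWt).add hH_t
  have hφr : HasDerivAt (fun ρ => (t - ρ) * Wc (t, ρ) + Hc (t, ρ))
      ((0 - 1) * Wc (t, r) + (t - r) * pr (Mp A u (vf u)) t r + fderiv ℝ Hc (t, r) (0, 1)) r := by
    rw [hprW]
    exact (((hasDerivAt_const r t).sub (hasDerivAt_id r)).mul hWr).add hH_r
  have hpt2 : pt (Mp A u fun t'' r'' => (t'' - r'') * vf u t'' r'') t r
      = 1 * Wc (t, r) + (t - r) * pt (Mp A u (vf u)) t r + fderiv ℝ Hc (t, r) (1, 0) := by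
    rw [pt, show (fun s => Mp A u (fun t'' r'' => (t'' - r'') * vf u t'' r'') s r)
        = fun s => (s - r) * Wc (s, r) + Hc (s, r) from funext fun s => hMp2 s r]
    exact hφt.deriv
  have hpr2 : pr (Mp A u fun t'' r'' => (t'' - r'') * vf u t'' r'') t r
      = (0 - 1) * Wc (t, r) + (t - r) * pr (Mp A u (vf u)) t r + fderiv ℝ Hc (t, r) (0, 1) := by
    rw [pr, show (Mp A u (fun t'' r'' => (t'' - r'') * vf u t'' r'') t)
        = fun ρ => (t - ρ) * Wc (t, ρ) + Hc (t, ρ) from funext fun ρ => hMp2 t ρ]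
    exact hφr.deriv
  have hHfun : ∀ t' r', ((1 - A (u t' r')) / A (u t' r')) * vf u t' r' = Hc (t', r') := by
    intro t' r'
    rw [hHcdef]; rfl
  have hptH : pt (fun t' r' => ((1 - A (u t' r')) / A (u t' r')) * vf u t' r') t r
      = fderiv ℝ Hc (t, r) (1, 0) := by
    rw [pt, show (fun s => ((1 - A (u s r)) / A (u s r)) * vf u s r)
        = fun s => Hc (s, r) from funext fun s => hHfun s r]
    exact hH_t.deriv
  have hprH : pr (fun t' r' => ((1 - A (u t' r')) / A (u t' r')) * vf u t' r') t r
      = fderiv ℝ Hc (t, r) (0, 1) := by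
    rw [pr, show (fun ρ => ((1 - A (u t ρ)) / A (u t ρ)) * vf u t ρ)
        = fun ρ => Hc (t, ρ) from funext fun ρ => hHfun t ρ]
    exact hH_r.deriv
  simp only [Mm, hpt2, hpr2, hptH, hprH, hptu, hpru, hptW, hprW, hTT, hsymm, hW t r]
  field_simp
  ring
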